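/- arXiv:1101.4353 — 3 statements merged into one kernel-verified Lean document; each statement's English description precedes it below -/
import Mathlib

section
/- Let Ω be a convex set of signed measures of total mass 1 and suppose Q* ∈ Ω is the chi-square projection of the probability measure P on Ω (i.e., Q* minimizes χ²(·,P) over Ω). Then for all Q ∈ Ω with χ²(Q,P) < ∞, the density q* = dQ*/dP satisfies ∫ q* dQ* ≤ ∫ q* dQ. -/
open MeasureTheory Filter Topology Set

/-! Write `f = q* - 1` and `g = q - q*`. By convexity `q* + t g ∈ Ω` for `t ∈ (0, 1]`, and
minimality of `q*` gives `0 ≤ χ²(q* + t g) - χ²(q*) = t (2 ∫ f g dP + t ∫ g² dP)`. Dividing by `t`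
and letting `t → 0⁺` yields the variational inequality `0 ≤ ∫ f g dP`, which is the claim because
`∫ q dP = ∫ q* dP = 1`. -/

lemma nonneg_of_forall_add_mul_nonneg {a b : ℝ} (h : ∀ t ∈ Ioc (0 : ℝ) 1, 0 ≤ a + b * t) :
    0 ≤ a := by
  have hlim : Tendsto (fun t => a + b * t) (𝓝[>] 0) (𝓝 a) := by
    have : Tendsto (fun t => a + b * t) (𝓝 0) (𝓝 (a + b * 0)) :=
      (continuous_const.add (continuous_const.mul continuous_id)).tendsto 0
    simpa using this.mono_left nhdsWithin_le_nhds
  refine ge_of_tendsto hlim ?_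
  filter_upwards [Ioc_mem_nhdsGT zero_lt_one] with t ht using h t ht

section

variable {α : Type*} [MeasurableSpace α] {μ : Measure α}

lemma integral_add_mul_sq {f g : α → ℝ} (hf : MemLp f 2 μ) (hg : MemLp g 2 μ) (t : ℝ) :
    ∫ x, (f x + t * g x) ^ 2 ∂μ =
      ∫ x, f x ^ 2 ∂μ + t * (2 * ∫ x, f x * g x ∂μ + t * ∫ x, g x ^ 2 ∂μ) := by
  have hfg : Integrable (fun x => f x * g x) μ := hf.integrable_mul hg
  have hexpand : (fun x => (f x + t * g x) ^ 2) =
      fun x => f x ^ 2 + ((2 * t) * (f x * g x) + t ^ 2 * g x ^ 2) := by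
    ext x; ring
  rw [hexpand, integral_add, integral_add, integral_const_mul, integral_const_mul]
  · ring
  exacts [hfg.const_mul _, hg.integrable_sq.const_mul _, hf.integrable_sq,
    (hfg.const_mul _).add (hg.integrable_sq.const_mul _)]

lemma integral_sub_mul_sub_nonneg_of_minimizes {S : Set (α → ℝ)} (hS : Convex ℝ S)
    {c p q : α → ℝ} (hc : MemLp c 2 μ) (hp : p ∈ S) (hpL2 : MemLp p 2 μ)
    (hmin : ∀ r ∈ S, MemLp r 2 μ → ∫ x, (p x - c x) ^ 2 ∂μ ≤ ∫ x, (r x - c x) ^ 2 ∂μ)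
    (hq : q ∈ S) (hqL2 : MemLp q 2 μ) :
    0 ≤ ∫ x, (p x - c x) * (q x - p x) ∂μ := by
  have hf : MemLp (p - c) 2 μ := hpL2.sub hc
  have hg : MemLp (q - p) 2 μ := hqL2.sub hpL2
  suffices h : ∀ t ∈ Ioc (0 : ℝ) 1,
      0 ≤ 2 * ∫ x, (p x - c x) * (q x - p x) ∂μ + (∫ x, (q x - p x) ^ 2 ∂μ) * t by
    linarith [nonneg_of_forall_add_mul_nonneg h]
  intro t ht
  have hmem : p + t • (q - p) ∈ S := hS.add_smul_sub_mem hp hq (Ioc_subset_Icc_self ht)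
  have hle := hmin _ hmem (hpL2.add (hg.const_smul t))
  have hshift : (fun x => ((p + t • (q - p)) x - c x) ^ 2) =
      fun x => ((p - c) x + t * (q - p) x) ^ 2 := by
    ext x; simp only [Pi.add_apply, Pi.smul_apply, Pi.sub_apply, smul_eq_mul]; ring
  rw [hshift, integral_add_mul_sq hf hg] at hle
  simp only [Pi.sub_apply] at hle
  nlinarith [ht.1]

end

/-- If `Ω` (represented by a convex set `D` of densities `q = dQ/dP`, `∫ q dP = 1`)
is convex and `q*` is the chi-square projection of `P` on `Ω`, then
for all `Q ∈ Ω` with `χ²(Q,P) < ∞`, `∫ q* dQ* ≤ ∫ q* dQ`. -/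
theorem stmt_2 {α : Type*} [MeasurableSpace α] (P : Measure α) [IsProbabilityMeasure P]
    (D : Set (α → ℝ))
    (hD : ∀ q ∈ D, Integrable q P ∧ ∫ x, q x ∂P = 1)
    (hconv : ∀ q₁ ∈ D, ∀ q₂ ∈ D, ∀ t : ℝ, 0 ≤ t → t ≤ 1 →
      (fun x => t * q₁ x + (1 - t) * q₂ x) ∈ D)
    (qs : α → ℝ) (hqs : qs ∈ D) (hqsL2 : MemLp qs 2 P)
    (hmin : ∀ q ∈ D, MemLp q 2 P →
      ∫ x, (qs x - 1) ^ 2 ∂P ≤ ∫ x, (q x - 1) ^ 2 ∂P) :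
    ∀ q ∈ D, MemLp q 2 P →
      ∫ x, qs x * qs x ∂P ≤ ∫ x, qs x * q x ∂P := by
  intro q hq hqL2
  have hD_convex : Convex ℝ D := by
    refine convex_iff_add_mem.2 fun q₁ h₁ q₂ h₂ a b ha hb hab => ?_
    obtain rfl : b = 1 - a := by linarith
    exact hconv q₁ h₁ q₂ h₂ a ha (by linarith)
  have hvar := integral_sub_mul_sub_nonneg_of_minimizes hD_convex (memLp_const 1) hqs hqsL2
    hmin hq hqL2
  obtain ⟨hqsInt, hqsMean⟩ := hD qs hqs
  obtain ⟨hqInt, hqMean⟩ := hD q hq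
  have hexpand : (fun x => (qs x - 1) * (q x - qs x)) =
      fun x => (qs x * q x - qs x * qs x) - (q x - qs x) := by
    ext x; ring
  have hqsq : Integrable (fun x => qs x * q x) P := hqsL2.integrable_mul hqL2
  have hqsqs : Integrable (fun x => qs x * qs x) P := hqsL2.integrable_mul hqsL2
  rw [hexpand, integral_sub, integral_sub hqsq hqsqs, integral_sub hqInt hqsInt, hqMean,
    hqsMean] at hvar
  · linarith
  exacts [hqsq.sub hqsqs, hqInt.sub hqsInt]
end

section
/- Let Ω be a set of signed measures of total mass 1 and suppose Q* ∈ Ω has density q* = dQ*/dP such that for all Q ∈ Ω with χ²(Q,P) < ∞ one has q* ∈ L¹(Q) and ∫ q* dQ* ≤ ∫ q* dQ. Then Q* is the chi-square projection of P on Ω, i.e., χ²(Q*,P) ≤ χ²(Q,P) for all Q ∈ Ω. -/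
/-!
Since every density in `D` has `P`-integral one, `χ²(q, P) = ∫ q² dP - 1`. For `q ∈ L²(P)` the
pointwise bound `2 q* q ≤ q*² + q²` integrates to `2 ∫ q* q ≤ ∫ q*² + ∫ q²`, and combined with
`∫ q*² ≤ ∫ q* q` this gives `∫ q*² ≤ ∫ q²`.
-/

open MeasureTheory

section

variable {α : Type*} [MeasurableSpace α]

lemma integral_sub_one_sq_of_integral_eq_one {μ : Measure α} [IsProbabilityMeasure μ]
    {q : α → ℝ} (hq : MemLp q 2 μ) (hq_one : ∫ x, q x ∂μ = 1) :
    ∫ x, (q x - 1) ^ 2 ∂μ = ∫ x, q x * q x ∂μ - 1 := by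
  have hq_int : Integrable q μ := hq.integrable one_le_two
  have hqq_int : Integrable (fun x => q x * q x) μ := by simpa only [sq] using hq.integrable_sq
  have h_expand : (fun x => (q x - 1) ^ 2) = fun x => q x * q x - 2 * q x + 1 := by
    funext x; ring
  have hdiff_int : Integrable (fun x => q x * q x - 2 * q x) μ := hqq_int.sub (hq_int.const_mul 2)
  rw [h_expand, integral_add hdiff_int (integrable_const 1),
    integral_sub hqq_int (hq_int.const_mul 2), integral_const_mul, hq_one]
  simp only [integral_const, probReal_univ, smul_eq_mul]
  ring

lemma two_mul_integral_mul_le_integral_mul_self_add {μ : Measure α} {f g : α → ℝ}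
    (hf : MemLp f 2 μ) (hg : MemLp g 2 μ) :
    2 * ∫ x, f x * g x ∂μ ≤ ∫ x, f x * f x ∂μ + ∫ x, g x * g x ∂μ := by
  have hfg_int : Integrable (fun x => f x * g x) μ := hf.integrable_mul hg
  have hff_int : Integrable (fun x => f x * f x) μ := by simpa only [sq] using hf.integrable_sq
  have hgg_int : Integrable (fun x => g x * g x) μ := by simpa only [sq] using hg.integrable_sq
  rw [← integral_const_mul, ← integral_add hff_int hgg_int]
  refine integral_mono (hfg_int.const_mul 2) (hff_int.add hgg_int) fun x => ?_
  nlinarith [sq_nonneg (f x - g x)]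

end

/-- Converse: if `q* ∈ Ω` (densities `D`) satisfies `q* ∈ L¹(Q)` and
`∫ q* dQ* ≤ ∫ q* dQ` for all `Q ∈ Ω` with `χ²(Q,P) < ∞`, then `Q*` is the
chi-square projection of `P` on `Ω`: `χ²(Q*,P) ≤ χ²(Q,P)` for all `Q ∈ Ω`. -/
theorem stmt_3 {α : Type*} [MeasurableSpace α] (P : Measure α) [IsProbabilityMeasure P]
    (D : Set (α → ℝ))
    (hD : ∀ q ∈ D, Integrable q P ∧ ∫ x, q x ∂P = 1)
    (qs : α → ℝ) (hqs : qs ∈ D) (hqsL2 : MemLp qs 2 P)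
    (hproj : ∀ q ∈ D, MemLp q 2 P →
      Integrable (fun x => qs x * q x) P ∧
      ∫ x, qs x * qs x ∂P ≤ ∫ x, qs x * q x ∂P) :
    ∀ q ∈ D, MemLp q 2 P →
      ∫ x, (qs x - 1) ^ 2 ∂P ≤ ∫ x, (q x - 1) ^ 2 ∂P := by
  intro q hq hqL2
  rw [integral_sub_one_sq_of_integral_eq_one hqsL2 (hD qs hqs).2,
    integral_sub_one_sq_of_integral_eq_one hqL2 (hD q hq).2]
  have h_proj := (hproj q hq hqL2).2
  have h_sq := two_mul_integral_mul_le_integral_mul_self_add hqsL2 hqL2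
  linarith
end

section
/- Let p₁,…,p_m > 0 with p_{m+1} := 1 − Σᵢ pᵢ > 0. Let D = diag(p₁,…,p_m) and U(i,l) = √(pᵢ p_l), and set S = D^{1/2}(I − U)D^{1/2}, i.e., S(i,l) = pᵢ δ_{il} − pᵢ p_l. Then every eigenvalue λ of S satisfies p_{m+1} · min_{1≤i≤m} pᵢ ≤ λ ≤ max_{1≤i≤m} pᵢ. -/
/-!
The quadratic form of `S = diag p - p pᵀ` is `v ↦ ∑ pᵢ vᵢ² - (∑ pᵢ vᵢ)²`, so an eigenvalue is a
value of the Rayleigh quotient of this form. Dropping the nonnegative square gives the upper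
bound `maxᵢ pᵢ`. For the lower bound, the weighted Cauchy–Schwarz inequality
`(∑ pᵢ vᵢ)² ≤ (∑ pᵢ)(∑ pᵢ vᵢ²)` leaves at least `p_{m+1} ∑ pᵢ vᵢ² ≥ p_{m+1} (minᵢ pᵢ) ∑ vᵢ²`.
-/

open Matrix

namespace Matrix

variable {n : Type*} [Fintype n]

theorem exists_dotProduct_mulVec_eq_of_hasEigenvalue [DecidableEq n] {A : Matrix n n ℝ}
    {lam : ℝ} (hlam : Module.End.HasEigenvalue (toLin' A) lam) :
    ∃ v : n → ℝ, 0 < v ⬝ᵥ v ∧ v ⬝ᵥ A *ᵥ v = lam * (v ⬝ᵥ v) := by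
  obtain ⟨v, hv⟩ := hlam.exists_hasEigenvector
  have hAv : A *ᵥ v = lam • v := by simpa [toLin'_apply] using hv.apply_eq_smul
  refine ⟨v, ?_, by rw [hAv, dotProduct_smul, smul_eq_mul]⟩
  exact lt_of_le_of_ne (Finset.sum_nonneg fun i _ => mul_self_nonneg (v i))
    (Ne.symm (dotProduct_self_eq_zero.not.mpr hv.2))

theorem le_of_hasEigenvalue_of_forall_le_dotProduct_mulVec [DecidableEq n] {A : Matrix n n ℝ}
    {c lam : ℝ} (hlam : Module.End.HasEigenvalue (toLin' A) lam)
    (hA : ∀ v, c * (v ⬝ᵥ v) ≤ v ⬝ᵥ A *ᵥ v) : c ≤ lam := by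
  obtain ⟨v, hpos, hv⟩ := exists_dotProduct_mulVec_eq_of_hasEigenvalue hlam
  exact le_of_mul_le_mul_right (hv ▸ hA v) hpos

theorem le_of_hasEigenvalue_of_forall_dotProduct_mulVec_le [DecidableEq n] {A : Matrix n n ℝ}
    {c lam : ℝ} (hlam : Module.End.HasEigenvalue (toLin' A) lam)
    (hA : ∀ v, v ⬝ᵥ A *ᵥ v ≤ c * (v ⬝ᵥ v)) : lam ≤ c := by
  obtain ⟨v, hpos, hv⟩ := exists_dotProduct_mulVec_eq_of_hasEigenvalue hlam
  exact le_of_mul_le_mul_right (hv ▸ hA v) hpos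

theorem dotProduct_mulVec_diagonal_sub_vecMulVec {R : Type*} [CommRing R] [DecidableEq n]
    (d a v : n → R) :
    v ⬝ᵥ (diagonal d - vecMulVec a a) *ᵥ v = ∑ i, d i * v i ^ 2 - (a ⬝ᵥ v) ^ 2 := by
  rw [sub_mulVec, dotProduct_sub, vecMulVec_mulVec, op_smul_eq_smul, dotProduct_smul, smul_eq_mul,
    dotProduct_comm v a, ← sq]
  congr 1
  exact Finset.sum_congr rfl fun i _ => by simp only [mulVec_diagonal]; ring

end Matrix

section WeightedSumOfSquares

variable {n : Type*} [Fintype n] (p v : n → ℝ)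

theorem iInf_mul_dotProduct_self_le : (⨅ i, p i) * (v ⬝ᵥ v) ≤ ∑ i, p i * v i ^ 2 := by
  rw [dotProduct, Finset.mul_sum]
  refine Finset.sum_le_sum fun i _ => ?_
  rw [← sq]
  exact mul_le_mul_of_nonneg_right (ciInf_le (Finite.bddBelow_range p) i) (sq_nonneg _)

theorem sum_mul_sq_le_iSup_mul_dotProduct_self : ∑ i, p i * v i ^ 2 ≤ (⨆ i, p i) * (v ⬝ᵥ v) := by
  rw [dotProduct, Finset.mul_sum]
  refine Finset.sum_le_sum fun i _ => ?_
  rw [← sq]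
  exact mul_le_mul_of_nonneg_right (le_ciSup (Finite.bddAbove_range p) i) (sq_nonneg _)

theorem sq_dotProduct_le_sum_mul_sum_mul_sq (hp : ∀ i, 0 ≤ p i) :
    (p ⬝ᵥ v) ^ 2 ≤ (∑ i, p i) * ∑ i, p i * v i ^ 2 :=
  Finset.sum_sq_le_sum_mul_sum_of_sq_le_mul _ (fun i _ => hp i)
    (fun i _ => mul_nonneg (hp i) (sq_nonneg _)) fun i _ => le_of_eq (by ring)

end WeightedSumOfSquares

theorem stmt_9_general {m : ℕ} (p : Fin m → ℝ) (hp : ∀ i, 0 < p i)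
    (hsum : ∑ i, p i < 1) (pm1 : ℝ) (hpm1 : pm1 = 1 - ∑ i, p i)
    (S : Matrix (Fin m) (Fin m) ℝ)
    (hS : S = Matrix.of fun i l => (if i = l then p i else 0) - p i * p l) :
    ∀ lam : ℝ,
      Module.End.HasEigenvalue (Matrix.toLin' S : Module.End ℝ (Fin m → ℝ)) lam →
      pm1 * (⨅ i, p i) ≤ lam ∧ lam ≤ ⨆ i, p i := by
  intro lam hlam
  have hS' : S = diagonal p - vecMulVec p p := by
    ext i l
    simp [hS, diagonal_apply, vecMulVec_apply]
  subst hS'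
  have hp0 : ∀ i, 0 ≤ p i := fun i => (hp i).le
  constructor
  · refine le_of_hasEigenvalue_of_forall_le_dotProduct_mulVec hlam fun v => ?_
    rw [dotProduct_mulVec_diagonal_sub_vecMulVec]
    have hpm1_nonneg : 0 ≤ pm1 := by linarith
    calc pm1 * (⨅ i, p i) * (v ⬝ᵥ v) ≤ pm1 * ∑ i, p i * v i ^ 2 := by
          rw [mul_assoc]; gcongr; exact iInf_mul_dotProduct_self_le p v
      _ = ∑ i, p i * v i ^ 2 - (∑ i, p i) * ∑ i, p i * v i ^ 2 := by rw [hpm1]; ring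
      _ ≤ ∑ i, p i * v i ^ 2 - (p ⬝ᵥ v) ^ 2 := by
          gcongr; exact sq_dotProduct_le_sum_mul_sum_mul_sq p v hp0
  · refine le_of_hasEigenvalue_of_forall_dotProduct_mulVec_le hlam fun v => ?_
    rw [dotProduct_mulVec_diagonal_sub_vecMulVec]
    linarith [sq_nonneg (p ⬝ᵥ v), sum_mul_sq_le_iSup_mul_dotProduct_self p v]

/-- Eigenvalue bounds for the multinomial covariance matrix
`S(i,l) = pᵢ δ_{il} − pᵢ p_l`: every eigenvalue `λ` satisfies
`p_{m+1} · minᵢ pᵢ ≤ λ ≤ maxᵢ pᵢ`. -/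
theorem stmt_9 {m : ℕ} [NeZero m] (p : Fin m → ℝ) (hp : ∀ i, 0 < p i)
    (hsum : ∑ i, p i < 1) (pm1 : ℝ) (hpm1 : pm1 = 1 - ∑ i, p i)
    (S : Matrix (Fin m) (Fin m) ℝ)
    (hS : S = Matrix.of fun i l => (if i = l then p i else 0) - p i * p l) :
    ∀ lam : ℝ,
      Module.End.HasEigenvalue (Matrix.toLin' S : Module.End ℝ (Fin m → ℝ)) lam →
      pm1 * (⨅ i, p i) ≤ lam ∧ lam ≤ ⨆ i, p i :=
  stmt_9_general p hp hsum pm1 hpm1 S hS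
end
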